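/- If M is a symplectic manifold with symplectic form ω of dimension 2m, then for φ = exp(iω) ∈ Ωᵉᵛ(M) ⊗ ℂ, the spinor pairing satisfies ⟨φ, φ̄⟩ = ((-2i)ᵐ/m!) ωᵐ, which is nowhere vanishing. -/
import Mathlib


set_option synthInstance.maxHeartbeats 1000000
set_option maxHeartbeats 1000000

/-!
STATEMENT 11: If `M` is a symplectic manifold of dimension `2m` with symplectic form
`ω`, then for `φ = exp(iω) ∈ Ωᵉᵛ ⊗ ℂ` the spinor pairing satisfies
`⟨φ, φ̄⟩ = ((-2i)ᵐ/m!) ωᵐ`, which is nowhere vanishing.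
This is the (pointwise) exterior-algebra statement, `W` playing the role of the
cotangent space `V*` and nondegeneracy of `ω` expressed as `ωᵐ ≠ 0`.
Complex-valued forms are modelled as pairs `(real part, imaginary part)`.
-/

open ExteriorAlgebra DirectSum

variable {W : Type*} [AddCommGroup W] [Module ℝ W]

/-- The involution `σ(φ₂ₘ) = (-1)ᵐ φ₂ₘ`, `σ(φ₂ₘ₊₁) = (-1)ᵐ φ₂ₘ₊₁`. -/
noncomputable def sigmaForm (x : ExteriorAlgebra ℝ W) : ExteriorAlgebra ℝ W :=
  DirectSum.toAddMonoid
    (fun k : ℕ => (((-1 : ℝ) ^ (k / 2) • (⋀[ℝ]^k W).subtype).toAddMonoidHom))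
    (DirectSum.decompose (fun i : ℕ => ⋀[ℝ]^i W) x)

/-- Projection onto the degree-`n` graded component. -/
noncomputable def gradePiece (n : ℕ) (x : ExteriorAlgebra ℝ W) : ExteriorAlgebra ℝ W :=
  (DirectSum.decompose (fun i : ℕ => ⋀[ℝ]^i W) x n : ExteriorAlgebra ℝ W)

/-- The real spinor pairing `⟨φ,ψ⟩ = (σφ ∧ ψ)ₙ`. -/
noncomputable def spinorPairing (n : ℕ) (φ ψ : ExteriorAlgebra ℝ W) :
    ExteriorAlgebra ℝ W :=
  gradePiece n (sigmaForm φ * ψ)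

/-- A complex form, as a pair (real part, imaginary part). -/
abbrev CForm (W : Type*) [AddCommGroup W] [Module ℝ W] :=
  ExteriorAlgebra ℝ W × ExteriorAlgebra ℝ W

/-- Wedge product of complex forms. -/
def cmul (x y : CForm W) : CForm W :=
  (x.1 * y.1 - x.2 * y.2, x.1 * y.2 + x.2 * y.1)

/-- Complex conjugation of a complex form. -/
def cconj (x : CForm W) : CForm W := (x.1, -x.2)

/-- Scalar multiplication of a complex form by a complex number. -/
def csmul (c : ℂ) (x : CForm W) : CForm W :=
  (c.re • x.1 - c.im • x.2, c.im • x.1 + c.re • x.2)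

/-- Wedge powers of a complex form. -/
def cpow (x : CForm W) : ℕ → CForm W
  | 0 => (1, 0)
  | k + 1 => cmul x (cpow x k)

/-- The exponential `exp x = Σ xᵏ/k!` of a complex form (a finite sum). -/
noncomputable def cexp [FiniteDimensional ℝ W] (x : CForm W) : CForm W :=
  ∑ k ∈ Finset.range (Module.finrank ℝ W + 1), (k.factorial : ℝ)⁻¹ • cpow x k

/-- The complex-bilinear spinor pairing on complex forms. -/
noncomputable def cSpinorPairing (n : ℕ) (φ ψ : CForm W) : CForm W :=
  (spinorPairing n φ.1 ψ.1 - spinorPairing n φ.2 ψ.2,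
   spinorPairing n φ.1 ψ.2 + spinorPairing n φ.2 ψ.1)

-- AUX
noncomputable def sigmaHom : ExteriorAlgebra ℝ W →+ ExteriorAlgebra ℝ W where
  toFun := sigmaForm
  map_zero' := by simp [sigmaForm]
  map_add' x y := by simp [sigmaForm, DirectSum.decompose_add]

noncomputable def gradeHom (n : ℕ) : ExteriorAlgebra ℝ W →+ ExteriorAlgebra ℝ W where
  toFun := gradePiece n
  map_zero' := by simp [gradePiece]
  map_add' x y := by simp [gradePiece, DirectSum.decompose_add]

lemma sigmaForm_of_mem {n : ℕ} {x : ExteriorAlgebra ℝ W} (hx : x ∈ ⋀[ℝ]^n W) :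
    sigmaForm x = ((-1 : ℝ) ^ (n / 2)) • x := by
  rw [sigmaForm, DirectSum.decompose_of_mem (fun i : ℕ => ⋀[ℝ]^i W) hx,
    DirectSum.toAddMonoid_of]
  simp

lemma gradePiece_of_mem_same {n : ℕ} {x : ExteriorAlgebra ℝ W} (hx : x ∈ ⋀[ℝ]^n W) :
    gradePiece n x = x := by
  rw [gradePiece, DirectSum.decompose_of_mem_same (fun i : ℕ => ⋀[ℝ]^i W) hx]

lemma gradePiece_of_mem_ne {n j : ℕ} (hne : j ≠ n) {x : ExteriorAlgebra ℝ W}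
    (hx : x ∈ ⋀[ℝ]^n W) : gradePiece j x = 0 := by
  rw [gradePiece, DirectSum.decompose_of_mem_ne (fun i : ℕ => ⋀[ℝ]^i W) hx (Ne.symm hne)]

lemma pow_mem_ext {ω : ExteriorAlgebra ℝ W} (hω : ω ∈ ⋀[ℝ]^2 W) (k : ℕ) :
    ω ^ k ∈ ⋀[ℝ]^(2*k) W := by
  have := SetLike.pow_mem_graded k hω
  simpa [smul_eq_mul, Nat.mul_comm] using this

lemma spinor_sum (m N : ℕ) {ω : ExteriorAlgebra ℝ W} (hω : ω ∈ ⋀[ℝ]^2 W) (a b : ℕ → ℝ) :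
    spinorPairing (2*m) (∑ k ∈ Finset.range N, a k • ω^k) (∑ l ∈ Finset.range N, b l • ω^l)
      = (∑ k ∈ Finset.range N, ∑ l ∈ Finset.range N,
          if k + l = m then (-1:ℝ)^k * (a k * b l) else 0) • ω^m := by
  rw [spinorPairing]
  have hsig : sigmaForm (∑ k ∈ Finset.range N, a k • ω^k)
      = ∑ k ∈ Finset.range N, ((-1:ℝ)^k * a k) • ω^k := by
    rw [show sigmaForm (∑ k ∈ Finset.range N, a k • ω^k)
        = sigmaHom (∑ k ∈ Finset.range N, a k • ω^k) from rfl, map_sum]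
    refine Finset.sum_congr rfl fun k _ => ?_
    have hmem : a k • ω^k ∈ ⋀[ℝ]^(2*k) W :=
      Submodule.smul_mem _ _ (pow_mem_ext hω k)
    rw [show sigmaHom (a k • ω^k) = sigmaForm (a k • ω^k) from rfl,
      sigmaForm_of_mem hmem, Nat.mul_div_cancel_left k (by norm_num), smul_smul]
  rw [hsig, Finset.sum_mul_sum]
  have hterm : ∀ k l : ℕ,
      (((-1:ℝ)^k * a k) • ω^k) * (b l • ω^l) = ((-1:ℝ)^k * (a k * b l)) • ω^(k+l) := by
    intro k l
    rw [smul_mul_smul, ← pow_add, mul_assoc]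
  have : gradePiece (2*m) (∑ k ∈ Finset.range N, ∑ l ∈ Finset.range N,
            (((-1:ℝ)^k * a k) • ω^k) * (b l • ω^l))
      = ∑ k ∈ Finset.range N, ∑ l ∈ Finset.range N,
          (if k + l = m then (-1:ℝ)^k * (a k * b l) else 0) • ω^m := by
    rw [show (gradePiece (2*m) : ExteriorAlgebra ℝ W → ExteriorAlgebra ℝ W)
        = gradeHom (2*m) from rfl, map_sum]
    refine Finset.sum_congr rfl fun k _ => ?_
    rw [map_sum]
    refine Finset.sum_congr rfl fun l _ => ?_
    rw [hterm k l]
    have hmem : ((-1:ℝ)^k * (a k * b l)) • ω^(k+l) ∈ ⋀[ℝ]^(2*(k+l)) W :=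
      Submodule.smul_mem _ _ (pow_mem_ext hω (k+l))
    by_cases h : k + l = m
    · subst h
      rw [if_pos rfl]
      exact gradePiece_of_mem_same hmem
    · rw [if_neg h, zero_smul]
      exact gradePiece_of_mem_ne (by omega) hmem
  rw [this]
  rw [Finset.sum_smul]
  refine Finset.sum_congr rfl fun k _ => ?_
  rw [Finset.sum_smul]

lemma cpow_eq (ω : ExteriorAlgebra ℝ W) (k : ℕ) :
    cpow ((0, ω) : CForm W) k
      = ((Complex.I^k).re • ω^k, (Complex.I^k).im • ω^k) := by
  induction k with
  | zero => simp [cpow]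
  | succ k ih =>
    rw [cpow, ih, pow_succ Complex.I, Complex.mul_I_re, Complex.mul_I_im]
    simp [cmul, mul_smul_comm, smul_mul_assoc, ← pow_succ, ← pow_succ', neg_smul]

lemma cexp_eq [FiniteDimensional ℝ W] (m : ℕ) (hdim : Module.finrank ℝ W = 2 * m)
    (ω : ExteriorAlgebra ℝ W) :
    cexp ((0, ω) : CForm W)
      = (∑ k ∈ Finset.range (2*m+1), (Complex.I^k / (k.factorial : ℂ)).re • ω^k,
         ∑ k ∈ Finset.range (2*m+1), (Complex.I^k / (k.factorial : ℂ)).im • ω^k) := by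
  have hc : ∀ k : ℕ, ∀ z : ℂ, (z / (k.factorial : ℂ)).re = (k.factorial : ℝ)⁻¹ * z.re := by
    intro k z
    rw [show ((k.factorial : ℕ) : ℂ) = (((k.factorial : ℝ)) : ℂ) by push_cast; ring,
      div_eq_inv_mul, ← Complex.ofReal_inv, Complex.re_ofReal_mul]
  have hc' : ∀ k : ℕ, ∀ z : ℂ, (z / (k.factorial : ℂ)).im = (k.factorial : ℝ)⁻¹ * z.im := by
    intro k z
    rw [show ((k.factorial : ℕ) : ℂ) = (((k.factorial : ℝ)) : ℂ) by push_cast; ring,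
      div_eq_inv_mul, ← Complex.ofReal_inv, Complex.im_ofReal_mul]
  rw [cexp, hdim]
  refine Prod.ext ?_ ?_
  · rw [Prod.fst_sum]
    refine Finset.sum_congr rfl fun k _ => ?_
    rw [cpow_eq, Prod.smul_fst, hc k, smul_smul]
  · rw [Prod.snd_sum]
    refine Finset.sum_congr rfl fun k _ => ?_
    rw [cpow_eq, Prod.smul_snd, hc' k, smul_smul]

def Fsum (N m : ℕ) (u v : ℕ → ℝ) : ℝ :=
  ∑ k ∈ Finset.range N, ∑ l ∈ Finset.range N,
    if k + l = m then (-1:ℝ)^k * (u k * v l) else 0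

noncomputable def Gsum (N m : ℕ) (c : ℕ → ℂ) : ℂ :=
  ∑ k ∈ Finset.range N, ∑ l ∈ Finset.range N,
    if k + l = m then (((-1:ℝ)^k : ℂ)) * (c k * (starRingEnd ℂ) (c l)) else 0

lemma re_Gsum (N m : ℕ) (c : ℕ → ℂ) :
    (Gsum N m c).re
      = Fsum N m (fun k => (c k).re) (fun k => (c k).re)
        + Fsum N m (fun k => (c k).im) (fun k => (c k).im) := by
  rw [Gsum, Fsum, Fsum, Complex.re_sum, ← Finset.sum_add_distrib]
  refine Finset.sum_congr rfl fun k _ => ?_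
  rw [Complex.re_sum, ← Finset.sum_add_distrib]
  refine Finset.sum_congr rfl fun l _ => ?_
  have hre : ((-1:ℂ)^k).re = (-1:ℝ)^k := by
    rw [show (-1:ℂ) = ((-1:ℝ):ℂ) by norm_num, ← Complex.ofReal_pow, Complex.ofReal_re]
  have him : ((-1:ℂ)^k).im = 0 := by
    rw [show (-1:ℂ) = ((-1:ℝ):ℂ) by norm_num, ← Complex.ofReal_pow, Complex.ofReal_im]
  split_ifs with h
  · simp [Complex.mul_re, Complex.mul_im, Complex.conj_re, Complex.conj_im, hre, him]
    ring
  · simp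

lemma im_Gsum (N m : ℕ) (c : ℕ → ℂ) :
    (Gsum N m c).im
      = Fsum N m (fun k => (c k).im) (fun k => (c k).re)
        - Fsum N m (fun k => (c k).re) (fun k => (c k).im) := by
  rw [Gsum, Fsum, Fsum, Complex.im_sum, ← Finset.sum_sub_distrib]
  refine Finset.sum_congr rfl fun k _ => ?_
  rw [Complex.im_sum, ← Finset.sum_sub_distrib]
  refine Finset.sum_congr rfl fun l _ => ?_
  have hre : ((-1:ℂ)^k).re = (-1:ℝ)^k := by
    rw [show (-1:ℂ) = ((-1:ℝ):ℂ) by norm_num, ← Complex.ofReal_pow, Complex.ofReal_re]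
  have him : ((-1:ℂ)^k).im = 0 := by
    rw [show (-1:ℂ) = ((-1:ℝ):ℂ) by norm_num, ← Complex.ofReal_pow, Complex.ofReal_im]
  split_ifs with h
  · simp [Complex.mul_re, Complex.mul_im, Complex.conj_re, Complex.conj_im, hre, him]
    ring
  · simp

lemma Fsum_neg_right (N m : ℕ) (u v : ℕ → ℝ) :
    Fsum N m u (fun l => -(v l)) = -(Fsum N m u v) := by
  rw [Fsum, Fsum, ← Finset.sum_neg_distrib]
  refine Finset.sum_congr rfl fun k _ => ?_
  rw [← Finset.sum_neg_distrib]
  refine Finset.sum_congr rfl fun l _ => ?_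
  split_ifs with h <;> ring

lemma sum_diag {β : Type*} [AddCommMonoid β] (m : ℕ) (f : ℕ → ℕ → β) :
    ∑ k ∈ Finset.range (2*m+1), ∑ l ∈ Finset.range (2*m+1), (if k + l = m then f k l else 0)
      = ∑ k ∈ Finset.range (m+1), f k (m-k) := by
  have h1 : ∀ k ∈ Finset.range (2*m+1),
      (∑ l ∈ Finset.range (2*m+1), if k + l = m then f k l else 0)
        = if k ∈ Finset.range (m+1) then f k (m-k) else 0 := by
    intro k _
    by_cases hkm : k ≤ m
    · rw [if_pos (by simp; omega)]
      rw [Finset.sum_eq_single_of_mem (m-k) (by simp; omega)]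
      · rw [if_pos (by omega)]
      · intro l _ hl; rw [if_neg (by omega)]
    · rw [if_neg (by simp; omega)]
      exact Finset.sum_eq_zero fun l _ => if_neg (by omega)
  rw [Finset.sum_congr rfl h1, Finset.sum_ite_mem,
    Finset.inter_eq_right.mpr (Finset.range_subset_range.mpr (by omega))]

lemma scalar_key (m : ℕ) :
    Gsum (2*m+1) m (fun k => Complex.I^k / (k.factorial : ℂ))
      = (-2 * Complex.I) ^ m / (m.factorial : ℂ) := by
  rw [Gsum, sum_diag]
  have hterm : ∀ k ∈ Finset.range (m+1),
      ((((-1:ℝ))^k : ℂ) * ((Complex.I^k / (k.factorial : ℂ))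
        * (starRingEnd ℂ) (Complex.I^(m-k) / ((m-k).factorial : ℂ))))
        = (-Complex.I)^m * (((k.factorial : ℂ) * ((m-k).factorial : ℂ))⁻¹) := by
    intro k hk
    simp only [map_div₀, map_pow, Complex.conj_I, map_natCast]
    rw [show (((-1:ℝ))^k : ℂ) = (-1:ℂ)^k by push_cast; ring]
    rw [div_mul_div_comm, ← mul_div_assoc, ← mul_assoc, ← mul_pow,
      show (-1:ℂ) * Complex.I = -Complex.I by ring, ← pow_add,
      show k + (m-k) = m by simp at hk; omega, div_eq_mul_inv]
  rw [Finset.sum_congr rfl hterm, ← Finset.mul_sum]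
  have hm : ∑ k ∈ Finset.range (m+1), (((k.factorial : ℂ)) * ((m-k).factorial : ℂ))⁻¹
      = 2^m / (m.factorial : ℂ) := by
    have h2 : ((2:ℂ)^m) = ∑ k ∈ Finset.range (m+1), (m.choose k : ℂ) := by
      rw [← Nat.cast_sum, Nat.sum_range_choose]; push_cast; ring
    rw [eq_div_iff (by exact_mod_cast m.factorial_ne_zero), Finset.sum_mul, h2]
    apply Finset.sum_congr rfl
    intro k hk
    rw [Nat.cast_choose ℂ (by simp at hk; omega)]
    have h1 : ((k.factorial : ℂ)) ≠ 0 := by exact_mod_cast k.factorial_ne_zero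
    have h2 : (((m-k).factorial : ℂ)) ≠ 0 := by exact_mod_cast (m-k).factorial_ne_zero
    field_simp
  rw [hm, show (-2 : ℂ) * Complex.I = -Complex.I * 2 by ring, mul_pow, ← mul_div_assoc]

theorem symplectic_spinor_pairing [FiniteDimensional ℝ W] (m : ℕ)
    (hdim : Module.finrank ℝ W = 2 * m)
    (ω : ExteriorAlgebra ℝ W) (hω : ω ∈ ⋀[ℝ]^2 W) (hnd : ω ^ m ≠ 0) :
    -- `⟨exp(iω), conj (exp(iω))⟩ = ((-2i)ᵐ / m!) ωᵐ` …
    cSpinorPairing (2 * m) (cexp ((0, ω) : CForm W)) (cconj (cexp ((0, ω) : CForm W)))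
      = csmul ((-2 * Complex.I) ^ m / (m.factorial : ℂ)) ((ω ^ m, 0) : CForm W) ∧
    -- … which is non-vanishing
    cSpinorPairing (2 * m) (cexp ((0, ω) : CForm W)) (cconj (cexp ((0, ω) : CForm W)))
      ≠ 0 := by
  set N : ℕ := 2*m+1 with hN
  set c : ℂ := (-2 * Complex.I) ^ m / (m.factorial : ℂ) with hcdef
  set ck : ℕ → ℂ := fun k => Complex.I^k / (k.factorial : ℂ) with hck
  set a : ℕ → ℝ := fun k => (ck k).re with ha
  set b : ℕ → ℝ := fun k => (ck k).im with hb
  set bneg : ℕ → ℝ := fun l => -(b l) with hbneg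
  have hexp : cexp ((0, ω) : CForm W)
      = (∑ k ∈ Finset.range N, a k • ω^k, ∑ k ∈ Finset.range N, b k • ω^k) :=
    cexp_eq m hdim ω
  have hconj : cconj (cexp ((0, ω) : CForm W))
      = (∑ k ∈ Finset.range N, a k • ω^k, ∑ l ∈ Finset.range N, bneg l • ω^l) := by
    rw [hexp, cconj]
    refine Prod.ext rfl ?_
    simp only [hbneg, neg_smul, Finset.sum_neg_distrib]
  have hpair : cSpinorPairing (2*m) (cexp ((0, ω) : CForm W)) (cconj (cexp ((0, ω) : CForm W)))
      = ((Fsum N m a a - Fsum N m b bneg) • ω^m,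
         (Fsum N m a bneg + Fsum N m b a) • ω^m) := by
    rw [hconj, hexp, cSpinorPairing]
    simp only
    rw [spinor_sum m N hω a a, spinor_sum m N hω b bneg,
      spinor_sum m N hω a bneg, spinor_sum m N hω b a,
      ← sub_smul, ← add_smul]
    rfl
  have hG : Gsum N m ck = c := scalar_key m
  have hre : Fsum N m a a - Fsum N m b bneg = c.re := by
    rw [hbneg, Fsum_neg_right, sub_neg_eq_add, ← hG, re_Gsum]
  have him : Fsum N m a bneg + Fsum N m b a = c.im := by
    rw [hbneg, Fsum_neg_right, ← hG, im_Gsum]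
    ring
  have hrhs : csmul c ((ω ^ m, 0) : CForm W) = (c.re • ω^m, c.im • ω^m) := by
    simp [csmul]
  have hmain : cSpinorPairing (2*m) (cexp ((0, ω) : CForm W)) (cconj (cexp ((0, ω) : CForm W)))
      = csmul c ((ω ^ m, 0) : CForm W) := by
    rw [hpair, hrhs, hre, him]
  refine ⟨hmain, ?_⟩
  rw [hmain, hrhs]
  intro h
  have hc0 : c ≠ 0 := by
    refine div_ne_zero (pow_ne_zero _ ?_) ?_
    · exact mul_ne_zero (by norm_num) Complex.I_ne_zero
    · exact_mod_cast m.factorial_ne_zero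
  have h1 : c.re • ω^m = 0 := congrArg Prod.fst h
  have h2 : c.im • ω^m = 0 := congrArg Prod.snd h
  have hre0 : c.re = 0 := by
    rcases smul_eq_zero.mp h1 with h | h
    · exact h
    · exact absurd h hnd
  have him0 : c.im = 0 := by
    rcases smul_eq_zero.mp h2 with h | h
    · exact h
    · exact absurd h hnd
  exact hc0 (Complex.ext hre0 him0)
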